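/- arXiv:2104.10394 — 2 statements merged into one kernel-verified Lean document; each statement's English description precedes it below -/
import Mathlib

section
/- Under Assumptions A1 and A2, for each MSP j with c̃ⱼ + V·tⱼ(0) < p₀ + V·t̄₀, the first-order condition −((p − c̃ⱼ)/V)·(tⱼ⁻¹)'((p₀ − p)/V + t̄₀) + tⱼ⁻¹((p₀ − p)/V + t̄₀) = 0 has a unique solution p* in the interval [c̃ⱼ, p₀ + V·(t̄₀ − tⱼ(0))], and p* is the unique maximizer of Uⱼ(p) = (p − c̃ⱼ)·tⱼ⁻¹((p₀ − p)/V + t̄₀) on that interval. -/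
/-!
The inverse of the convex increasing travel-time function `t` is concave and increasing, so its
derivative is antitone and, by concavity, everywhere positive. Hence the marginal profit
`F = U'` is strictly decreasing for `p ≥ c̃`: the demand term decreases, and so does
`-((p - c̃) / V) · (t⁻¹)'`. It is positive at `p = c̃` and negative at the choke price, where demand
vanishes, so Darboux's theorem yields a zero `p*`; as `U' = F` is strictly decreasing, `U` is
strictly concave and `p*` is its unique maximizer.
-/

open Set

theorem ConcaveOn.deriv_pos_of_strictMono {g : ℝ → ℝ} (hconc : ConcaveOn ℝ univ g)
    (hmono : StrictMono g) {x : ℝ} (hx : DifferentiableAt ℝ g x) : 0 < deriv g x :=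
  calc 0 < slope g x (x + 1) := (slope_pos_iff (lt_add_one x)).2 (hmono (lt_add_one x))
    _ ≤ deriv g x := hconc.slope_le_deriv (mem_univ _) (mem_univ _) (lt_add_one x) hx

theorem StrictConcaveOn.lt_of_hasDerivAt_eq_zero {f : ℝ → ℝ} {s : Set ℝ} {x y : ℝ}
    (hf : StrictConcaveOn ℝ s f) (hx : x ∈ s) (hy : y ∈ s) (hyx : y ≠ x)
    (hd : HasDerivAt f 0 x) : f y < f x := by
  rcases hyx.lt_or_gt with hlt | hgt
  · exact (slope_pos_iff hlt).1 (hf.lt_slope_of_hasDerivAt hy hx hlt hd)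
  · exact (slope_neg_iff_of_le hgt.le).1 (hf.slope_lt_of_hasDerivAt hx hy hgt hd)

section Profit

variable (g : ℝ → ℝ) (V p0 tbar c : ℝ)

/- `g` plays the role of `t⁻¹`: at price `p` the provider serves the flow whose travel time
`(p0 - p) / V + tbar` makes users indifferent to public transport. -/
noncomputable def profit (p : ℝ) : ℝ :=
  (p - c) * g ((p0 - p) / V + tbar)

noncomputable def marginalProfit (p : ℝ) : ℝ :=
  -((p - c) / V) * deriv g ((p0 - p) / V + tbar) + g ((p0 - p) / V + tbar)

variable {g V p0 tbar c}

theorem hasDerivAt_profit (hg : Differentiable ℝ g) (p : ℝ) :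
    HasDerivAt (profit g V p0 tbar c) (marginalProfit g V p0 tbar c p) p := by
  have harg : HasDerivAt (fun q : ℝ => (p0 - q) / V + tbar) (-1 / V) p :=
    (((hasDerivAt_id p).const_sub p0).div_const V).add_const tbar
  refine (((hasDerivAt_id' p).sub_const c).mul ((hg _).hasDerivAt.comp p harg)).congr_deriv ?_
  simp only [marginalProfit, Function.comp_apply]
  ring

theorem strictAntiOn_marginalProfit (hV : 0 < V) (hconc : ConcaveOn ℝ univ g)
    (hmono : StrictMono g) (hg : Differentiable ℝ g) :
    StrictAntiOn (marginalProfit g V p0 tbar c) (Ici c) := by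
  intro p₁ (hp₁ : c ≤ p₁) p₂ (hp₂ : c ≤ p₂) hlt
  have harg : (p0 - p₂) / V + tbar < (p0 - p₁) / V + tbar := by gcongr
  have hderiv : deriv g ((p0 - p₁) / V + tbar) ≤ deriv g ((p0 - p₂) / V + tbar) :=
    hconc.antitoneOn_deriv (fun x _ => hg x) (mem_univ _) (mem_univ _) harg.le
  have hpos := hconc.deriv_pos_of_strictMono hmono (hg ((p0 - p₁) / V + tbar))
  have hslope : (p₁ - c) / V * deriv g ((p0 - p₁) / V + tbar)
      ≤ (p₂ - c) / V * deriv g ((p0 - p₂) / V + tbar) := by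
    gcongr
  have hdemand := hmono harg
  simp only [marginalProfit]
  linarith

theorem strictConcaveOn_profit (hV : 0 < V) (hconc : ConcaveOn ℝ univ g)
    (hmono : StrictMono g) (hg : Differentiable ℝ g) :
    StrictConcaveOn ℝ (Ici c) (profit g V p0 tbar c) := by
  refine StrictAntiOn.strictConcaveOn_of_deriv (convex_Ici c)
    (fun p _ => (hasDerivAt_profit hg p).continuousAt.continuousWithinAt) ?_
  have hderiv : deriv (profit g V p0 tbar c) = marginalProfit g V p0 tbar c :=
    funext fun p => (hasDerivAt_profit hg p).deriv
  rw [interior_Ici, hderiv]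
  exact (strictAntiOn_marginalProfit hV hconc hmono hg).mono Ioi_subset_Ici_self

theorem marginalProfit_self_pos {z : ℝ} (hV : 0 < V) (hmono : StrictMono g) (hz : g z = 0)
    (hc : c + V * z < p0 + V * tbar) : 0 < marginalProfit g V p0 tbar c c := by
  have harg : z < (p0 - c) / V + tbar := by
    rw [← sub_lt_iff_lt_add, lt_div_iff₀ hV]
    linarith [sub_mul z tbar V]
  rw [marginalProfit, sub_self, zero_div, neg_zero, zero_mul, zero_add, ← hz]
  exact hmono harg

theorem marginalProfit_neg_of_eq_zero {z : ℝ} (hV : 0 < V) (hconc : ConcaveOn ℝ univ g)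
    (hmono : StrictMono g) (hg : DifferentiableAt ℝ g z) (hz : g z = 0)
    (hc : c < p0 + V * (tbar - z)) :
    marginalProfit g V p0 tbar c (p0 + V * (tbar - z)) < 0 := by
  have harg : (p0 - (p0 + V * (tbar - z))) / V + tbar = z := by
    field_simp
    ring
  rw [marginalProfit, harg, hz, add_zero, neg_mul, neg_lt_zero]
  exact mul_pos (div_pos (sub_pos.2 hc) hV) (hconc.deriv_pos_of_strictMono hmono hg)

end Profit

theorem stmt_8_general
    (V p0 tbar ctil : ℝ)
    (hV : 0 < V)
    (t tinv : ℝ → ℝ)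
    -- Assumption A1
    (ht_conv : ConvexOn ℝ Set.univ t)
    (ht_strict : StrictMono t)
    -- tinv is the (differentiable) inverse of t
    (htinv_right : ∀ y, t (tinv y) = y)
    (htinv_diff : Differentiable ℝ tinv)
    -- the provider is competitive
    (hcomp : ctil + V * t 0 < p0 + V * tbar)
    -- the profit and the first-order condition
    (U F : ℝ → ℝ)
    (hU : ∀ p, U p = (p - ctil) * tinv ((p0 - p) / V + tbar))
    (hF : ∀ p, F p = -((p - ctil) / V) * deriv tinv ((p0 - p) / V + tbar)
      + tinv ((p0 - p) / V + tbar)) :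
    ∃ pstar ∈ Set.Icc ctil (p0 + V * (tbar - t 0)),
      F pstar = 0 ∧
      (∀ p ∈ Set.Icc ctil (p0 + V * (tbar - t 0)), F p = 0 → p = pstar) ∧
      (∀ p ∈ Set.Icc ctil (p0 + V * (tbar - t 0)), U p ≤ U pstar) ∧
      (∀ p ∈ Set.Icc ctil (p0 + V * (tbar - t 0)), U p = U pstar → p = pstar) := by
  obtain rfl : U = profit tinv V p0 tbar ctil := funext hU
  obtain rfl : F = marginalProfit tinv V p0 tbar ctil := funext hF
  set e := ht_strict.orderIsoOfRightInverse t tinv htinv_right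
  have hconc : ConcaveOn ℝ univ tinv := e.concaveOn_symm ht_conv
  have hmono : StrictMono tinv := e.symm.strictMono
  have hzero : tinv (t 0) = 0 := ht_strict.injective (htinv_right _)
  have hcb : ctil < p0 + V * (tbar - t 0) := by linarith [mul_sub V tbar (t 0)]
  obtain ⟨pstar, hpstar, hFpstar⟩ := exists_hasDerivWithinAt_eq_of_lt_of_gt hcb.le
    (fun p _ => (hasDerivAt_profit htinv_diff p).hasDerivWithinAt)
    (marginalProfit_self_pos hV hmono hzero hcomp)
    (marginalProfit_neg_of_eq_zero hV hconc hmono (htinv_diff _) hzero hcb)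
  have hmax : ∀ p ∈ Icc ctil (p0 + V * (tbar - t 0)), p ≠ pstar →
      profit tinv V p0 tbar ctil p < profit tinv V p0 tbar ctil pstar := fun p hp hne =>
    (strictConcaveOn_profit hV hconc hmono htinv_diff).lt_of_hasDerivAt_eq_zero
      hpstar.1.le hp.1 hne (hFpstar ▸ hasDerivAt_profit htinv_diff pstar)
  refine ⟨pstar, Ioo_subset_Icc_self hpstar, hFpstar, fun p hp hFp => ?_, fun p hp => ?_,
    fun p hp hUp => ?_⟩
  · exact (strictAntiOn_marginalProfit hV hconc hmono htinv_diff).injOn hp.1 hpstar.1.le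
      (hFp.trans hFpstar.symm)
  · rcases eq_or_ne p pstar with rfl | hne
    exacts [le_rfl, (hmax p hp hne).le]
  · by_contra hne
    exact (hmax p hp hne).ne hUp

/-- Under A1 and A2, if c̃ + V·t(0) < p₀ + V·t̄₀, the first-order
condition has a unique solution p* in [c̃, p₀ + V(t̄₀ − t(0))], and p* is the
unique maximizer of the MSP profit U(p) = (p − c̃)·t⁻¹((p₀ − p)/V + t̄₀) there. -/
theorem stmt_8
    (V p0 p0max tbar ctil : ℝ)
    (hV : 0 < V) (hctil : 0 ≤ ctil) (htbar : 0 ≤ tbar)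
    (hp0 : p0 ∈ Set.Icc (0 : ℝ) p0max)
    (t tinv : ℝ → ℝ)
    -- Assumption A1
    (ht_conv : ConvexOn ℝ Set.univ t)
    (ht_strict : StrictMono t)
    (ht_smooth : ContDiff ℝ 2 t)
    -- tinv is the (differentiable) inverse of t
    (htinv_left : ∀ z, tinv (t z) = z)
    (htinv_right : ∀ y, t (tinv y) = y)
    (htinv_diff : Differentiable ℝ tinv)
    -- Assumption A2 (single-provider form)
    (hA2 : tinv (p0max / V + tbar) ≤ 1)
    -- the provider is competitive
    (hcomp : ctil + V * t 0 < p0 + V * tbar)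
    -- the profit and the first-order condition
    (U F : ℝ → ℝ)
    (hU : ∀ p, U p = (p - ctil) * tinv ((p0 - p) / V + tbar))
    (hF : ∀ p, F p = -((p - ctil) / V) * deriv tinv ((p0 - p) / V + tbar)
      + tinv ((p0 - p) / V + tbar)) :
    ∃ pstar ∈ Set.Icc ctil (p0 + V * (tbar - t 0)),
      F pstar = 0 ∧
      (∀ p ∈ Set.Icc ctil (p0 + V * (tbar - t 0)), F p = 0 → p = pstar) ∧
      (∀ p ∈ Set.Icc ctil (p0 + V * (tbar - t 0)), U p ≤ U pstar) ∧
      (∀ p ∈ Set.Icc ctil (p0 + V * (tbar - t 0)), U p = U pstar → p = pstar) :=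
  stmt_8_general V p0 tbar ctil hV t tinv ht_conv ht_strict htinv_right htinv_diff hcomp U F hU hF
end

section
/- Under Assumptions A1 and A2 with affine tⱼ, the total flow served by MSPs at the induced equilibrium, Σⱼ xⱼ*(p₀) = Σⱼ (p₀ + V(t̄₀ − αⱼ) − c̃ⱼ)/(2Vβⱼ), is strictly less than Σⱼ tⱼ⁻¹(p₀/V + t̄₀) ≤ 1 for every p₀ ∈ [0, p₀^max], so the public transport flow x₀* = 1 − Σⱼ xⱼ*(p₀) is strictly positive. -/
open scoped BigOperators

/-!
With affine congestion `tⱼ(x) = αⱼ + βⱼ x`, the MSP's best-response price is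
`pⱼ* = (p₀ + V(t̄₀ − αⱼ) + c̃ⱼ)/2`, which is positive under the competitiveness condition,
and the served flow is `xⱼ* = tⱼ⁻¹((p₀ − pⱼ*)/V + t̄₀)`. Since `tⱼ⁻¹` is strictly increasing,
`xⱼ* < tⱼ⁻¹(p₀/V + t̄₀) ≤ tⱼ⁻¹(p₀^max/V + t̄₀)`, and summing over `j` against A2 leaves a
positive public transport flow.
-/

/-- The inverse `y ↦ (y - α)/β` of the affine congestion function `x ↦ α + β x`. -/
noncomputable def affineInv (α β y : ℝ) : ℝ := (y - α) / β

theorem affineInv_strictMono {α β : ℝ} (hβ : 0 < β) : StrictMono (affineInv α β) :=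
  fun _ _ hxy => div_lt_div_of_pos_right (sub_lt_sub_right hxy α) hβ

noncomputable def bestResponsePrice (V tbar p c α : ℝ) : ℝ := (p + V * (tbar - α) + c) / 2

theorem bestResponsePrice_pos {V tbar p c α : ℝ} (hc : 0 ≤ c)
    (hcomp : c + V * α < p + V * tbar) : 0 < bestResponsePrice V tbar p c α := by
  unfold bestResponsePrice
  linarith

theorem bestResponse_flow_eq {V tbar p c α : ℝ} (hV : V ≠ 0) (β : ℝ) :
    (p + V * (tbar - α) - c) / (2 * V * β) =
      affineInv α β ((p - bestResponsePrice V tbar p c α) / V + tbar) := by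
  unfold affineInv bestResponsePrice
  field_simp
  ring

theorem bestResponse_flow_lt_affineInv {V tbar p c α β : ℝ} (hV : 0 < V) (hβ : 0 < β)
    (hc : 0 ≤ c) (hcomp : c + V * α < p + V * tbar) :
    (p + V * (tbar - α) - c) / (2 * V * β) < affineInv α β (p / V + tbar) := by
  rw [bestResponse_flow_eq hV.ne']
  apply affineInv_strictMono hβ
  have := bestResponsePrice_pos hc hcomp
  gcongr
  linarith

theorem stmt_15_general
    (N : ℕ) (hN : 0 < N)
    (V tbar p0max p0 : ℝ) (hV : 0 < V)
    (hp0 : p0 ∈ Set.Icc (0 : ℝ) p0max)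
    (alpha beta ctil : Fin N → ℝ)
    (hbeta : ∀ j, 0 < beta j) (hctil : ∀ j, 0 ≤ ctil j)
    (hcomp : ∀ j, ctil j + V * alpha j < p0 + V * tbar)
    -- Assumption A2 in the affine case (tⱼ⁻¹(y) = (y − αⱼ)/βⱼ)
    (hA2 : (∑ j, (p0max / V + tbar - alpha j) / beta j) ≤ 1)
    -- flows served by the MSPs at their best responses
    (xstar : Fin N → ℝ)
    (hxstar : ∀ j, xstar j = (p0 + V * (tbar - alpha j) - ctil j) / (2 * V * beta j)) :
    (∑ j, xstar j) < (∑ j, (p0 / V + tbar - alpha j) / beta j) ∧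
    (∑ j, (p0 / V + tbar - alpha j) / beta j) ≤ 1 ∧
    0 < 1 - ∑ j, xstar j := by
  have hflow_lt : (∑ j, xstar j) < ∑ j, affineInv (alpha j) (beta j) (p0 / V + tbar) :=
    Finset.sum_lt_sum_of_nonempty (Finset.univ_nonempty_iff.mpr ⟨⟨0, hN⟩⟩) fun j _ =>
      hxstar j ▸ bestResponse_flow_lt_affineInv hV (hbeta j) (hctil j) (hcomp j)
  have hinv_le : (∑ j, affineInv (alpha j) (beta j) (p0 / V + tbar)) ≤ 1 :=
    (Finset.sum_le_sum fun j _ => (affineInv_strictMono (hbeta j)).monotone <| by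
      gcongr; exact hp0.2).trans hA2
  exact ⟨hflow_lt, hinv_le, by linarith⟩

/-- Under A1 and A2 with affine congestion functions, the total flow
served by the MSPs at the induced equilibrium is strictly less than
Σⱼ tⱼ⁻¹(p₀/V + t̄₀) ≤ 1 for every p₀ ∈ [0, p₀ᵐᵃˣ], so the public transport flow
x₀ = 1 − Σⱼ xⱼ* is strictly positive. -/
theorem stmt_15
    (N : ℕ) (hN : 0 < N)
    (V tbar p0max p0 : ℝ) (hV : 0 < V) (htbar : 0 ≤ tbar)
    (hp0 : p0 ∈ Set.Icc (0 : ℝ) p0max)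
    (alpha beta ctil : Fin N → ℝ)
    (halpha : ∀ j, 0 ≤ alpha j) (hbeta : ∀ j, 0 < beta j) (hctil : ∀ j, 0 ≤ ctil j)
    (hcomp : ∀ j, ctil j + V * alpha j < p0 + V * tbar)
    -- Assumption A2 in the affine case (tⱼ⁻¹(y) = (y − αⱼ)/βⱼ)
    (hA2 : (∑ j, (p0max / V + tbar - alpha j) / beta j) ≤ 1)
    -- flows served by the MSPs at their best responses
    (xstar : Fin N → ℝ)
    (hxstar : ∀ j, xstar j = (p0 + V * (tbar - alpha j) - ctil j) / (2 * V * beta j)) :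
    (∑ j, xstar j) < (∑ j, (p0 / V + tbar - alpha j) / beta j) ∧
    (∑ j, (p0 / V + tbar - alpha j) / beta j) ≤ 1 ∧
    0 < 1 - ∑ j, xstar j :=
  stmt_15_general N hN V tbar p0max p0 hV hp0 alpha beta ctil hbeta hctil hcomp hA2 xstar hxstar
end
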